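/- arXiv:0910.3787 — 7 statements merged into one kernel-verified Lean document; each statement's English description precedes it below -/
import Mathlib

section
/- Let k ≥ 2, 0 ≤ β < 1, and let p, q be analytic on the unit disk with p(0) = q(0) = 1 and Re p(z) > β, Re q(z) > β on the disk. Define h(z) = ((k+2)/4) p(z) - ((k-2)/4) q(z). Then Re h(z) > 0 for all |z| < r(k,β), where r(k,β) = ((1-β)k - √((1-β)²k² - 4(1-2β)))/(2(1-2β)) if β ≠ 1/2, and r(k,β) = 2/k if β = 1/2. -/
open Metric

/-!
If `β < Re f` and `f 0 = 1` on the unit disk, then `(f - 1) / (f - (2β - 1))` maps the disk into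
itself and fixes `0`, so the Schwarz lemma gives `‖f z - 1‖ ≤ ‖z‖ ‖f z - (2β - 1)‖`. Taking real
parts, `(1 - (1 - 2β) t) / (1 + t) ≤ Re f z ≤ (1 + (1 - 2β) t) / (1 - t)` for `‖z‖ = t`.
Using the lower bound for `p` and the upper bound for `q`, `(1 - t²) Re h z` is at least
`Q t = (1 - 2β) t² - (1 - β) k t + 1`, and `r(k, β) = 2 / (B + √(B² - 4 (1 - 2β)))` with
`B = (1 - β) k` is the smallest positive root of `Q`.
-/

/-- The Carathéodory class `P(β)`. -/
structure IsInCaratheodoryClass (β : ℝ) (f : ℂ → ℂ) : Prop where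
  differentiableOn : DifferentiableOn ℂ f (ball 0 1)
  map_zero : f 0 = 1
  lt_re : ∀ z ∈ ball (0 : ℂ) 1, β < (f z).re

namespace Complex

lemma norm_sub_one_lt_norm_sub_of_lt_re {β : ℝ} (hβ : β < 1) {w : ℂ} (hw : β < w.re) :
    ‖w - 1‖ < ‖w - ((2 * β - 1 : ℝ) : ℂ)‖ := by
  rw [← sq_lt_sq₀ (norm_nonneg _) (norm_nonneg _), Complex.sq_norm, Complex.sq_norm, normSq_apply, normSq_apply]
  simp only [sub_re, sub_im, one_re, one_im, ofReal_re, ofReal_im]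
  nlinarith

lemma abs_re_sub_le_of_norm_sub_le {w : ℂ} {a b t : ℝ} (ht0 : 0 ≤ t) (ht1 : t ≤ 1)
    (h : ‖w - a‖ ≤ t * ‖w - b‖) : |w.re - a| ≤ t * |w.re - b| := by
  have hsq : ‖w - a‖ ^ 2 ≤ t ^ 2 * ‖w - b‖ ^ 2 := by
    rw [← mul_pow]
    exact pow_le_pow_left₀ (norm_nonneg _) h 2
  rw [Complex.sq_norm, Complex.sq_norm, normSq_apply, normSq_apply] at hsq
  simp only [sub_re, sub_im, ofReal_re, ofReal_im, sub_zero] at hsq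
  rw [← abs_of_nonneg ht0, ← abs_mul, ← sq_le_sq]
  nlinarith [mul_le_mul_of_nonneg_right (pow_le_one₀ (n := 2) ht0 ht1) (mul_self_nonneg w.im)]

end Complex

namespace IsInCaratheodoryClass

variable {β : ℝ} {f : ℂ → ℂ}

theorem norm_sub_one_le (hf : IsInCaratheodoryClass β f) (hβ : β < 1) {z : ℂ}
    (hz : z ∈ ball (0 : ℂ) 1) : ‖f z - 1‖ ≤ ‖z‖ * ‖f z - ((2 * β - 1 : ℝ) : ℂ)‖ := by
  set c : ℂ := ((2 * β - 1 : ℝ) : ℂ)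
  have hlt : ∀ ζ ∈ ball (0 : ℂ) 1, ‖f ζ - 1‖ < ‖f ζ - c‖ := fun ζ hζ =>
    Complex.norm_sub_one_lt_norm_sub_of_lt_re hβ (hf.lt_re ζ hζ)
  have hne : ∀ ζ ∈ ball (0 : ℂ) 1, f ζ - c ≠ 0 := fun ζ hζ =>
    norm_pos_iff.mp ((norm_nonneg _).trans_lt (hlt ζ hζ))
  have hmaps : Set.MapsTo (fun ζ => (f ζ - 1) / (f ζ - c)) (ball 0 1) (closedBall 0 1) :=
    fun ζ hζ => by
      rw [mem_closedBall_zero_iff, norm_div]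
      exact div_le_one_of_le₀ (hlt ζ hζ).le (norm_nonneg _)
  have hschwarz := Complex.norm_le_norm_of_mapsTo_ball
    ((hf.differentiableOn.sub_const 1).div (hf.differentiableOn.sub_const c) hne) hmaps
    (by simp [hf.map_zero]) (mem_ball_zero_iff.mp hz)
  rwa [Pi.div_apply, norm_div, div_le_iff₀ (norm_pos_iff.mpr (hne z hz))] at hschwarz

theorem re_bounds (hf : IsInCaratheodoryClass β f) (hβ : β < 1) {z : ℂ}
    (hz : z ∈ ball (0 : ℂ) 1) :
    1 - (1 - 2 * β) * ‖z‖ ≤ (f z).re * (1 + ‖z‖) ∧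
      (f z).re * (1 - ‖z‖) ≤ 1 + (1 - 2 * β) * ‖z‖ := by
  have h := Complex.abs_re_sub_le_of_norm_sub_le (w := f z) (a := 1) (b := 2 * β - 1)
    (norm_nonneg z)
    (mem_ball_zero_iff.mp hz).le (by rw [Complex.ofReal_one]; exact hf.norm_sub_one_le hβ hz)
  have hre := hf.lt_re z hz
  rw [abs_of_pos (a := (f z).re - (2 * β - 1)) (by linarith), abs_le] at h
  constructor <;> linarith [h.1, h.2]

end IsInCaratheodoryClass

lemma two_le_add_sqrt {A B : ℝ} (h : 1 ≤ B - A) : 2 ≤ B + √(B ^ 2 - 4 * A) := by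
  have : 2 - B ≤ √(B ^ 2 - 4 * A) := Real.le_sqrt_of_sq_le (by nlinarith)
  linarith

lemma quadratic_pos_of_mul_lt_two {A B t : ℝ} (hD : 4 * A ≤ B ^ 2) (ht0 : 0 ≤ t)
    (ht : t * (B + √(B ^ 2 - 4 * A)) < 2) : 0 < A * t ^ 2 - B * t + 1 := by
  set s := √(B ^ 2 - 4 * A)
  have hs : s ^ 2 = B ^ 2 - 4 * A := Real.sq_sqrt (by linarith)
  have hfactor : A * t ^ 2 - B * t + 1 = (1 - t * (B + s) / 2) * (1 - t * (B - s) / 2) := by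
    linear_combination (t ^ 2 / 4) * hs
  have hts : 0 ≤ t * s := mul_nonneg ht0 (Real.sqrt_nonneg _)
  rw [hfactor]
  apply mul_pos <;> nlinarith

lemma four_mul_le_sq {k β : ℝ} (hk : 2 ≤ k) :
    4 * (1 - 2 * β) ≤ ((1 - β) * k) ^ 2 := by
  nlinarith [sq_nonneg β, mul_le_mul_of_nonneg_left (by nlinarith : (4 : ℝ) ≤ k ^ 2)
    (sq_nonneg (1 - β))]

-- Rationalising the numerator; the result also covers the branch `β = 1 / 2`.
lemma smallest_root_eq_two_div {k β : ℝ} (hk : 2 ≤ k) (hβ : β < 1) :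
    (if β = 1 / 2 then 2 / k
      else ((1 - β) * k - √((1 - β) ^ 2 * k ^ 2 - 4 * (1 - 2 * β))) / (2 * (1 - 2 * β))) =
      2 / ((1 - β) * k + √(((1 - β) * k) ^ 2 - 4 * (1 - 2 * β))) := by
  split_ifs with hhalf
  · subst hhalf
    rw [show ((1 - 1 / 2) * k) ^ 2 - 4 * (1 - 2 * (1 / 2)) = (k / 2) ^ 2 by ring,
      Real.sqrt_sq (by linarith)]
    ring
  · have hA : 2 * (1 - 2 * β) ≠ 0 := by
      intro h; exact hhalf (by linarith)
    have hsum : 0 < (1 - β) * k + √(((1 - β) * k) ^ 2 - 4 * (1 - 2 * β)) := by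
      linarith [two_le_add_sqrt (A := 1 - 2 * β) (B := (1 - β) * k) (by nlinarith)]
    have hs := Real.sq_sqrt (sub_nonneg.mpr (four_mul_le_sq (β := β) hk))
    rw [div_eq_div_iff hA hsum.ne', ← mul_pow]
    linear_combination -hs

lemma weighted_sub_pos {k β t x y : ℝ} (hk : 2 ≤ k) (ht0 : 0 ≤ t) (ht1 : t < 1)
    (hx : 1 - (1 - 2 * β) * t ≤ x * (1 + t)) (hy : y * (1 - t) ≤ 1 + (1 - 2 * β) * t)
    (hQ : 0 < (1 - 2 * β) * t ^ 2 - (1 - β) * k * t + 1) :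
    0 < (k + 2) / 4 * x - (k - 2) / 4 * y := by
  have hxw := mul_le_mul_of_nonneg_left hx (by nlinarith : (0 : ℝ) ≤ (k + 2) * (1 - t))
  have hyw := mul_le_mul_of_nonneg_left hy (by nlinarith : (0 : ℝ) ≤ (k - 2) * (1 + t))
  have hprod : 0 < (1 - t) * (1 + t) * ((k + 2) / 4 * x - (k - 2) / 4 * y) := by
    linarith
  exact pos_of_mul_pos_right hprod (by nlinarith)

theorem Pk_beta_positive_realpart_general (k β : ℝ) (hk : 2 ≤ k) (hβ1 : β < 1)
    (p q : ℂ → ℂ)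
    (hp : DifferentiableOn ℂ p (ball (0:ℂ) 1)) (hq : DifferentiableOn ℂ q (ball (0:ℂ) 1))
    (hp0 : p 0 = 1) (hq0 : q 0 = 1)
    (hpre : ∀ z ∈ ball (0:ℂ) 1, β < (p z).re)
    (hqre : ∀ z ∈ ball (0:ℂ) 1, β < (q z).re)
    (r : ℝ)
    (hr : r = if β = 1/2 then 2/k
          else ((1-β)*k - Real.sqrt ((1-β)^2*k^2 - 4*(1-2*β))) / (2*(1-2*β))) :
    ∀ z : ℂ, ‖z‖ < r →
      0 < ((((k:ℂ)+2)/4) * p z - (((k:ℂ)-2)/4) * q z).re := by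
  intro z hz
  have hsum := two_le_add_sqrt (A := 1 - 2 * β) (B := (1 - β) * k) (by nlinarith)
  rw [hr, smallest_root_eq_two_div hk hβ1, lt_div_iff₀ (by linarith)] at hz
  have hz1 : ‖z‖ < 1 := by nlinarith [norm_nonneg z]
  have hzball : z ∈ ball (0 : ℂ) 1 := mem_ball_zero_iff.mpr hz1
  have hpP : IsInCaratheodoryClass β p := ⟨hp, hp0, hpre⟩
  have hqP : IsInCaratheodoryClass β q := ⟨hq, hq0, hqre⟩
  have hre : ((((k:ℂ)+2)/4) * p z - (((k:ℂ)-2)/4) * q z).re =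
      (k + 2) / 4 * (p z).re - (k - 2) / 4 * (q z).re := by
    simp [Complex.sub_re, Complex.mul_re]
  rw [hre]
  exact weighted_sub_pos hk (norm_nonneg z) hz1 (hpP.re_bounds hβ1 hzball).1
    (hqP.re_bounds hβ1 hzball).2
    (quadratic_pos_of_mul_lt_two (four_mul_le_sq (β := β) hk) (norm_nonneg z) hz)

theorem Pk_beta_positive_realpart (k β : ℝ) (hk : 2 ≤ k) (hβ0 : 0 ≤ β) (hβ1 : β < 1)
    (p q : ℂ → ℂ)
    (hp : DifferentiableOn ℂ p (ball (0:ℂ) 1)) (hq : DifferentiableOn ℂ q (ball (0:ℂ) 1))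
    (hp0 : p 0 = 1) (hq0 : q 0 = 1)
    (hpre : ∀ z ∈ ball (0:ℂ) 1, β < (p z).re)
    (hqre : ∀ z ∈ ball (0:ℂ) 1, β < (q z).re)
    (r : ℝ)
    (hr : r = if β = 1/2 then 2/k
          else ((1-β)*k - Real.sqrt ((1-β)^2*k^2 - 4*(1-2*β))) / (2*(1-2*β))) :
    ∀ z : ℂ, ‖z‖ < r →
      0 < ((((k:ℂ)+2)/4) * p z - (((k:ℂ)-2)/4) * q z).re :=
  Pk_beta_positive_realpart_general k β hk hβ1 p q hp hq hp0 hq0 hpre hqre r hr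
end

section
/- Let k ≥ 2 and let p, q be analytic on the unit disk with p(0) = q(0) = 1 and positive real part. Set h(z) = ((k+2)/4)p(z) - ((k-2)/4)q(z). Then Re h(z) > 0 for all z with |z| < (k - √(k²-4))/2. -/
/-!
A Carathéodory function `p` is the Cayley transform `(1 + w) / (1 - w)` of a self-map `w` of the
disc fixing `0`, so by the Schwarz lemma `|w z| ≤ |z|`, which gives the Harnack bounds
`(1 - r) / (1 + r) ≤ Re p z ≤ (1 + r) / (1 - r)` on `|z| = r`. Bounding `Re p` from below and
`Re q` from above, `Re h z ≥ (r² - k r + 1) / (1 - r²)`, and `(k - √(k² - 4)) / 2` is the smaller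
root of `r² - k r + 1`.
-/

open Metric

structure IsCaratheodory (p : ℂ → ℂ) : Prop where
  differentiableOn : DifferentiableOn ℂ p (ball 0 1)
  map_zero : p 0 = 1
  re_pos : ∀ z ∈ ball (0 : ℂ) 1, 0 < (p z).re

namespace Complex

lemma norm_sub_one_lt_norm_add_one {w : ℂ} (hw : 0 < w.re) : ‖w - 1‖ < ‖w + 1‖ := by
  rw [← sq_lt_sq₀ (norm_nonneg _) (norm_nonneg _), Complex.sq_norm, Complex.sq_norm,
    normSq_apply, normSq_apply]
  simp only [sub_re, sub_im, add_re, add_im, one_re, one_im]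
  nlinarith

lemma eq_one_add_div_one_sub {w : ℂ} (hw : w + 1 ≠ 0) :
    w = (1 + (w - 1) / (w + 1)) / (1 - (w - 1) / (w + 1)) := by
  field_simp
  ring

lemma re_one_add_div_one_sub (u : ℂ) :
    ((1 + u) / (1 - u)).re = (1 - ‖u‖ ^ 2) / ‖1 - u‖ ^ 2 := by
  rw [div_re, Complex.sq_norm, Complex.sq_norm, ← add_div]
  congr 1
  simp only [normSq_apply, add_re, add_im, sub_re, sub_im, one_re, one_im]
  ring

lemma re_one_add_div_one_sub_mem_Icc {u : ℂ} {r : ℝ} (hu : ‖u‖ ≤ r) (hr : r < 1) :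
    ((1 + u) / (1 - u)).re ∈ Set.Icc ((1 - r) / (1 + r)) ((1 + r) / (1 - r)) := by
  have hre : |u.re| ≤ ‖u‖ := abs_re_le_norm u
  have hden : ‖1 - u‖ ^ 2 = 1 - 2 * u.re + ‖u‖ ^ 2 := by
    simp only [Complex.sq_norm, normSq_apply, sub_re, sub_im, one_re, one_im]; ring
  have hden_pos : 0 < ‖1 - u‖ ^ 2 := by
    have : 0 < ‖1 - u‖ := by
      calc 0 < 1 - ‖u‖ := by linarith
        _ ≤ ‖1 - u‖ := by simpa using norm_sub_norm_le (1 : ℂ) u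
    positivity
  have hu0 := norm_nonneg u
  obtain ⟨hre₁, hre₂⟩ := abs_le.mp hre
  rw [re_one_add_div_one_sub, Set.mem_Icc, div_le_div_iff₀ (by linarith) hden_pos,
    div_le_div_iff₀ hden_pos (by linarith), hden]
  constructor <;> nlinarith

end Complex

namespace IsCaratheodory

variable {p : ℂ → ℂ}

lemma add_one_ne_zero (hp : IsCaratheodory p) {z : ℂ} (hz : z ∈ ball (0 : ℂ) 1) :
    p z + 1 ≠ 0 := by
  intro h
  have := hp.re_pos z hz
  rw [eq_neg_of_add_eq_zero_left h] at this
  norm_num at this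

lemma norm_cayley_le (hp : IsCaratheodory p) {z : ℂ} (hz : z ∈ ball (0 : ℂ) 1) :
    ‖(p z - 1) / (p z + 1)‖ ≤ ‖z‖ := by
  have hmaps : Set.MapsTo (fun z => (p z - 1) / (p z + 1)) (ball 0 1) (closedBall 0 1) :=
    fun x hx => by
      rw [mem_closedBall_zero_iff, norm_div]
      exact div_le_one_of_le₀ (Complex.norm_sub_one_lt_norm_add_one (hp.re_pos x hx)).le
        (norm_nonneg _)
  refine Complex.norm_le_norm_of_mapsTo_ball ?_ hmaps (by simp [hp.map_zero])
    (mem_ball_zero_iff.mp hz)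
  exact (hp.differentiableOn.sub_const 1).div (hp.differentiableOn.add_const 1)
    fun x hx => hp.add_one_ne_zero hx

lemma re_mem_Icc (hp : IsCaratheodory p) {z : ℂ} (hz : z ∈ ball (0 : ℂ) 1) :
    (p z).re ∈ Set.Icc ((1 - ‖z‖) / (1 + ‖z‖)) ((1 + ‖z‖) / (1 - ‖z‖)) := by
  rw [Complex.eq_one_add_div_one_sub (hp.add_one_ne_zero hz)]
  exact Complex.re_one_add_div_one_sub_mem_Icc (hp.norm_cayley_le hz) (mem_ball_zero_iff.mp hz)

end IsCaratheodory

lemma sq_sub_mul_add_one_pos {k r : ℝ} (hk : 2 ≤ k) (hr : r < (k - √(k ^ 2 - 4)) / 2) :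
    0 < r ^ 2 - k * r + 1 := by
  have hsqrt : √(k ^ 2 - 4) ^ 2 = k ^ 2 - 4 := Real.sq_sqrt (by nlinarith)
  have : √(k ^ 2 - 4) < k - 2 * r := by linarith
  nlinarith [Real.sqrt_nonneg (k ^ 2 - 4)]

lemma lt_one_of_lt_half_sub_sqrt {k r : ℝ} (hk : 2 ≤ k) (hr : r < (k - √(k ^ 2 - 4)) / 2) :
    r < 1 := by
  have : k - 2 ≤ √(k ^ 2 - 4) := Real.le_sqrt_of_sq_le (by nlinarith)
  linarith

lemma pinchuk_combination_pos {k r a b : ℝ} (hk : 2 ≤ k) (hr₀ : 0 ≤ r) (hr₁ : r < 1)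
    (hkr : 0 < r ^ 2 - k * r + 1) (ha : (1 - r) / (1 + r) ≤ a) (hb : b ≤ (1 + r) / (1 - r)) :
    0 < (k + 2) / 4 * a - (k - 2) / 4 * b := by
  have h₁ : 0 < 1 + r := by linarith
  have h₂ : 0 < 1 - r := by linarith
  calc 0 < (r ^ 2 - k * r + 1) / ((1 + r) * (1 - r)) := by positivity
    _ = (k + 2) / 4 * ((1 - r) / (1 + r)) - (k - 2) / 4 * ((1 + r) / (1 - r)) := by
        field_simp
        ring
    _ ≤ (k + 2) / 4 * a - (k - 2) / 4 * b := by
        gcongr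

theorem pinchuk_lemma (k : ℝ) (hk : 2 ≤ k)
    (p q : ℂ → ℂ)
    (hp : DifferentiableOn ℂ p (ball (0:ℂ) 1)) (hq : DifferentiableOn ℂ q (ball (0:ℂ) 1))
    (hp0 : p 0 = 1) (hq0 : q 0 = 1)
    (hpre : ∀ z ∈ ball (0:ℂ) 1, 0 < (p z).re)
    (hqre : ∀ z ∈ ball (0:ℂ) 1, 0 < (q z).re) :
    ∀ z : ℂ, ‖z‖ < (k - Real.sqrt (k^2 - 4)) / 2 →
      0 < ((((k:ℂ)+2)/4) * p z - (((k:ℂ)-2)/4) * q z).re := by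
  intro z hz
  have hz₁ : z ∈ ball (0 : ℂ) 1 := mem_ball_zero_iff.mpr (lt_one_of_lt_half_sub_sqrt hk hz)
  have hre : ((((k:ℂ)+2)/4) * p z - (((k:ℂ)-2)/4) * q z).re
      = (k + 2) / 4 * (p z).re - (k - 2) / 4 * (q z).re := by
    simp [Complex.sub_re, Complex.mul_re]
  rw [hre]
  exact pinchuk_combination_pos hk (norm_nonneg z) (mem_ball_zero_iff.mp hz₁)
    (sq_sub_mul_add_one_pos hk hz) (IsCaratheodory.re_mem_Icc ⟨hp, hp0, hpre⟩ hz₁).1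
    (IsCaratheodory.re_mem_Icc ⟨hq, hq0, hqre⟩ hz₁).2
end

section
/- For k > 2, the function H(z) = ((k+2)/4)·L₀(-z) - ((k-2)/4)·L₀(z), where L₀(z) = (1+z)/(1-z), satisfies Re H(r) = (r² - k r + 1)/(1 - r²) for real 0 < r < 1; in particular Re H(r) = 0 exactly when r = (k - √(k²-4))/2, so H does not have positive real part on any disk of radius larger than (k - √(k²-4))/2. -/
noncomputable def L0 (z : ℂ) : ℂ := (1 + z) / (1 - z)

noncomputable def Hext (k : ℝ) (z : ℂ) : ℂ :=
  (((k:ℂ)+2)/4) * L0 (-z) - (((k:ℂ)-2)/4) * L0 z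

lemma L0_ofReal (x : ℝ) : L0 x = ((1 + x) / (1 - x) : ℝ) := by
  simp [L0]

lemma Hext_ofReal (k x : ℝ) :
    Hext k x = ((k + 2) / 4 * ((1 - x) / (1 + x)) - (k - 2) / 4 * ((1 + x) / (1 - x)) : ℝ) := by
  rw [Hext, ← Complex.ofReal_neg, L0_ofReal, L0_ofReal]
  push_cast
  ring

lemma Hext_ofReal_re (k r : ℝ) (hr : |r| < 1) :
    (Hext k r).re = (r ^ 2 - k * r + 1) / (1 - r ^ 2) := by
  rw [Hext_ofReal, Complex.ofReal_re]
  obtain ⟨hlo, hhi⟩ := abs_lt.mp hr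
  have hminus : 1 - r ≠ 0 := by linarith
  have hplus : 1 + r ≠ 0 := by linarith
  have hsq : 1 - r ^ 2 ≠ 0 := by nlinarith
  field_simp
  ring

/-- Of the two roots `(k ± √(k² - 4)) / 2` of `r² - k r + 1`, only the smaller one lies below `1`. -/
lemma sq_sub_mul_add_one_eq_zero_iff {k r : ℝ} (hk : 2 ≤ k) (hr : r < 1) :
    r ^ 2 - k * r + 1 = 0 ↔ r = (k - Real.sqrt (k ^ 2 - 4)) / 2 := by
  set s := Real.sqrt (k ^ 2 - 4)
  have hs : s * s = k ^ 2 - 4 := Real.mul_self_sqrt (by nlinarith)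
  have hdiscrim : discrim 1 (-k) 1 = s * s := by rw [discrim, hs]; ring
  have hroots := quadratic_eq_zero_iff one_ne_zero hdiscrim r
  simp only [neg_neg, mul_one, one_mul] at hroots
  rw [show r ^ 2 - k * r + 1 = r * r + -k * r + 1 by ring, hroots]
  have hlarge : (k + s) / 2 ≠ r := by
    have : 0 ≤ s := Real.sqrt_nonneg _
    linarith
  exact ⟨fun h => h.resolve_left (Ne.symm hlarge), Or.inr⟩

theorem extremal_H_real_part (k : ℝ) (hk : 2 < k) :
    (∀ r : ℝ, 0 < r → r < 1 →
      (Hext k (r:ℂ)).re = (r^2 - k*r + 1) / (1 - r^2)) ∧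
    (∀ r : ℝ, 0 < r → r < 1 →
      ((Hext k (r:ℂ)).re = 0 ↔ r = (k - Real.sqrt (k^2 - 4)) / 2)) := by
  have hre : ∀ r : ℝ, 0 < r → r < 1 →
      (Hext k (r:ℂ)).re = (r^2 - k*r + 1) / (1 - r^2) := fun r h0 h1 =>
    Hext_ofReal_re k r (abs_lt.mpr ⟨by linarith, h1⟩)
  refine ⟨hre, fun r h0 h1 => ?_⟩
  have hden : 1 - r ^ 2 ≠ 0 := by nlinarith
  rw [hre r h0 h1, div_eq_zero_iff, or_iff_left hden]
  exact sq_sub_mul_add_one_eq_zero_iff hk.le h1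
end

section
/- Let σ > 0, 0 ≤ β < 1, and let p be analytic on the unit disk with p(0) = 1 and Re p(z) > β. Then the transform φ_σ(p)(z) = (σ/z^σ) ∫₀^z t^{σ-1} p(t) dt also satisfies Re φ_σ(p)(z) > β for all z in the unit disk. -/
open Metric intervalIntegral

noncomputable def phiT (σ : ℝ) (p : ℂ → ℂ) (z : ℂ) : ℂ :=
  if z = 0 then 1 else
    ((σ:ℂ) / z ^ (σ:ℂ)) *
      (z * ∫ s in (0:ℝ)..1, ((s:ℂ) * z) ^ ((σ:ℂ) - 1) * p ((s:ℂ) * z))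

/-! Substituting `t = s z`, `φ_σ(p)(z) = σ ∫₀¹ s^(σ-1) p(s z) ds` is the average of `p` over the
segment `[0, z]` against the probability density `σ s^(σ-1)` on `[0, 1]`. Averaging keeps values in
the half-plane `Re w > β`, strictly so because `p` is continuous on the closed segment. -/

open Set MeasureTheory

lemma Complex.ofReal_mul_cpow_of_nonneg {a : ℝ} (ha : 0 ≤ a) (z c : ℂ) :
    ((a : ℂ) * z) ^ c = (a : ℂ) ^ c * z ^ c := by
  rcases eq_or_ne c 0 with rfl | hc
  · simp
  rcases ha.eq_or_lt with rfl | ha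
  · simp [Complex.zero_cpow hc]
  rcases eq_or_ne z 0 with rfl | hz
  · simp [Complex.zero_cpow hc]
  have ha' : (a : ℂ) ≠ 0 := Complex.ofReal_ne_zero.mpr ha.ne'
  rw [Complex.cpow_def_of_ne_zero (mul_ne_zero ha' hz), Complex.log_ofReal_mul ha hz,
    Complex.ofReal_log ha.le, add_mul, Complex.exp_add, ← Complex.cpow_def_of_ne_zero ha',
    ← Complex.cpow_def_of_ne_zero hz]

lemma re_intervalIntegral_ofReal_mul {f : ℝ → ℝ} {g : ℝ → ℂ} {a b : ℝ}
    (hf : IntervalIntegrable f volume a b) (hg : ContinuousOn g (uIcc a b)) :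
    (∫ s in a..b, (f s : ℂ) * g s).re = ∫ s in a..b, f s * (g s).re := by
  have hfg : IntervalIntegrable (fun s => (f s : ℂ) * g s) volume a b :=
    IntervalIntegrable.mul_continuousOn ⟨hf.1.ofReal (𝕜 := ℂ), hf.2.ofReal (𝕜 := ℂ)⟩ hg
  have hre := intervalIntegral_re hfg
  simp only [RCLike.re_to_complex, Complex.re_ofReal_mul] at hre
  exact hre.symm

lemma phiT_eq_mul_integral (σ : ℝ) (p : ℂ → ℂ) {z : ℂ} (hz : z ≠ 0) :
    phiT σ p z = σ * ∫ s in (0:ℝ)..1, ((s ^ (σ - 1) : ℝ) : ℂ) * p (s * z) := by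
  have hintegrand : EqOn (fun s : ℝ => ((s : ℂ) * z) ^ ((σ : ℂ) - 1) * p (s * z))
      (fun s : ℝ => z ^ ((σ : ℂ) - 1) * (((s ^ (σ - 1) : ℝ) : ℂ) * p (s * z))) (uIcc 0 1) := by
    intro s hs
    have hs0 : 0 ≤ s := by simpa [uIcc_of_le zero_le_one] using hs.1
    simp only
    rw [Complex.ofReal_mul_cpow_of_nonneg hs0, Complex.ofReal_cpow hs0]
    push_cast
    ring
  have hzσ : z * z ^ ((σ : ℂ) - 1) = z ^ (σ : ℂ) := by
    rw [Complex.cpow_sub _ _ hz, Complex.cpow_one, mul_div_cancel₀ _ hz]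
  have hzσ0 : z ^ (σ : ℂ) ≠ 0 := by simp [Complex.cpow_eq_zero_iff, hz]
  rw [phiT, if_neg hz, integral_congr hintegrand, intervalIntegral.integral_const_mul,
    ← mul_assoc z, hzσ, div_mul_eq_mul_div, mul_div_assoc, mul_div_cancel_left₀ _ hzσ0]

lemma lt_mul_integral_rpow_mul {σ β : ℝ} (hσ : 0 < σ) {g : ℝ → ℝ} (hg : ContinuousOn g (Icc 0 1))
    (hβ : ∀ s ∈ Ioo (0:ℝ) 1, β < g s) : β < σ * ∫ s in (0:ℝ)..1, s ^ (σ - 1) * g s := by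
  have hw : IntervalIntegrable (fun s : ℝ => s ^ (σ - 1)) volume 0 1 :=
    intervalIntegrable_rpow' (by linarith)
  have hmass : σ * ∫ s in (0:ℝ)..1, s ^ (σ - 1) = 1 := by
    rw [integral_rpow (Or.inl (by linarith)), sub_add_cancel, Real.one_rpow,
      Real.zero_rpow hσ.ne', sub_zero]
    field_simp
  have hexcess_int : IntervalIntegrable (fun s => s ^ (σ - 1) * (g s - β)) volume 0 1 :=
    hw.mul_continuousOn (by rw [uIcc_of_le zero_le_one]; exact hg.sub continuousOn_const)
  have hexcess : 0 < ∫ s in (0:ℝ)..1, s ^ (σ - 1) * (g s - β) :=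
    intervalIntegral_pos_of_pos_on hexcess_int
      (fun s hs => mul_pos (Real.rpow_pos_of_pos hs.1 _) (sub_pos.mpr (hβ s hs))) zero_lt_one
  have hsplit : ∫ s in (0:ℝ)..1, s ^ (σ - 1) * g s
      = (∫ s in (0:ℝ)..1, s ^ (σ - 1) * (g s - β)) + β * ∫ s in (0:ℝ)..1, s ^ (σ - 1) := by
    rw [← intervalIntegral.integral_const_mul,
      ← intervalIntegral.integral_add hexcess_int (hw.const_mul β)]
    congr 1 with s
    ring
  rw [hsplit, mul_add, mul_left_comm, hmass]
  linarith [mul_pos hσ hexcess]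

theorem phi_preserves_P_beta_general (σ β : ℝ) (hσ : 0 < σ) (hβ1 : β < 1)
    (p : ℂ → ℂ) (hp : DifferentiableOn ℂ p (ball (0:ℂ) 1))
    (hpre : ∀ z ∈ ball (0:ℂ) 1, β < (p z).re) :
    ∀ z ∈ ball (0:ℂ) 1, β < (phiT σ p z).re := by
  intro z hz
  rcases eq_or_ne z 0 with rfl | hz0
  · simpa [phiT] using hβ1
  have hsegment : ∀ s ∈ Icc (0:ℝ) 1, (s : ℂ) * z ∈ ball (0:ℂ) 1 := fun s hs => by
    simpa [Complex.real_smul] using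
      (convex_ball (0:ℂ) 1).smul_mem_of_zero_mem (mem_ball_self one_pos) hz hs
  have hcont : ContinuousOn (fun s : ℝ => p (s * z)) (Icc 0 1) :=
    hp.continuousOn.comp (by fun_prop) hsegment
  rw [phiT_eq_mul_integral σ p hz0, Complex.re_ofReal_mul,
    re_intervalIntegral_ofReal_mul (intervalIntegrable_rpow' (by linarith))
      (by rwa [uIcc_of_le zero_le_one])]
  exact lt_mul_integral_rpow_mul hσ (Complex.continuous_re.comp_continuousOn hcont)
    fun s hs => hpre _ (hsegment s (Ioo_subset_Icc_self hs))

theorem phi_preserves_P_beta (σ β : ℝ) (hσ : 0 < σ) (hβ0 : 0 ≤ β) (hβ1 : β < 1)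
    (p : ℂ → ℂ) (hp : DifferentiableOn ℂ p (ball (0:ℂ) 1)) (hp0 : p 0 = 1)
    (hpre : ∀ z ∈ ball (0:ℂ) 1, β < (p z).re) :
    ∀ z ∈ ball (0:ℂ) 1, β < (phiT σ p z).re :=
  phi_preserves_P_beta_general σ β hσ hβ1 p hp hpre
end

section
/- For 0 ≤ β < 1, k ≥ 2 and 0 ≤ ρ < 1, if h(z) = ((k+2)/4)p(z) - ((k-2)/4)q(z) with p, q in P(β), then for every z with |z| = ρ: Re h(z) ≥ ((1-2β)ρ² - (1-β)kρ + 1)/(1 - ρ²). -/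
/-!
For `p ∈ P(β)` the function `ω = (p - 1) / (p + 1 - 2β)` maps the unit disk into itself and
vanishes at `0`, so by Schwarz's lemma `‖ω z‖ ≤ ‖z‖`. Inverting,
`p = 2β - 1 + 2(1 - β) / (1 - ω)`, and on `‖ω‖ ≤ ρ` the real part of `1 / (1 - ω)` lies between
`1 / (1 + ρ)` and `1 / (1 - ρ)`; this gives the two sharp bounds for `Re p`. As `k ≥ 2`, both
coefficients `(k + 2) / 4` and `(k - 2) / 4` are nonnegative, so the lower bound for `Re p` and the
upper bound for `Re q` combine to the claim.
-/

open Metric Complex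

/-- The class `P(β)`. -/
def CaratheodoryClass (β : ℝ) : Set (ℂ → ℂ) :=
  {p | DifferentiableOn ℂ p (ball 0 1) ∧ p 0 = 1 ∧ ∀ z ∈ ball (0 : ℂ) 1, β < (p z).re}

lemma norm_sub_one_lt_norm_add_one_sub {β : ℝ} (hβ : β < 1) {w : ℂ} (h : β < w.re) :
    ‖w - 1‖ < ‖w + 1 - 2 * β‖ := by
  rw [← sq_lt_sq₀ (norm_nonneg _) (norm_nonneg _), Complex.sq_norm, Complex.sq_norm]
  simp only [normSq_apply, sub_re, add_re, one_re, sub_im, add_im, one_im, mul_re, mul_im,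
    ofReal_re, ofReal_im, re_ofNat, im_ofNat]
  nlinarith [mul_pos (sub_pos.mpr h) (sub_pos.mpr hβ)]

lemma add_one_sub_ne_zero {β : ℝ} (hβ : β < 1) {w : ℂ} (h : β < w.re) :
    w + 1 - 2 * β ≠ 0 :=
  norm_pos_iff.mp ((norm_nonneg _).trans_lt (norm_sub_one_lt_norm_add_one_sub hβ h))

lemma eq_of_sub_one_div_add_one_sub {β : ℝ} (hβ : β ≠ 1) {w : ℂ} (hw : w + 1 - 2 * β ≠ 0) :
    w = 2 * β - 1 + 2 * (1 - β) * (1 - (w - 1) / (w + 1 - 2 * β))⁻¹ := by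
  have hβ' : (1 - β : ℂ) ≠ 0 := sub_ne_zero.mpr (mod_cast hβ.symm)
  have : 1 - (w - 1) / (w + 1 - 2 * β) = 2 * (1 - β) / (w + 1 - 2 * β) := by
    field_simp; ring
  rw [this, inv_div]
  field_simp
  ring

lemma re_inv_one_sub_mem_Icc {w : ℂ} {ρ : ℝ} (hw : ‖w‖ ≤ ρ) (hρ : ρ < 1) :
    1 / (1 + ρ) ≤ (1 - w)⁻¹.re ∧ (1 - w)⁻¹.re ≤ 1 / (1 - ρ) := by
  have hsq : w.re ^ 2 + w.im ^ 2 ≤ ρ ^ 2 := by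
    have := Complex.sq_norm w
    rw [normSq_apply] at this
    nlinarith [norm_nonneg w]
  have hre : |w.re| ≤ ρ := (abs_re_le_norm w).trans hw
  obtain ⟨hre₁, hre₂⟩ := abs_le.mp hre
  have hD : 0 < normSq (1 - w) := normSq_pos.mpr (sub_ne_zero.mpr fun h => by
    simp [← h] at hw; linarith)
  have hD' : normSq (1 - w) = (1 - w.re) ^ 2 + w.im ^ 2 := by simp [normSq_apply]; ring
  rw [inv_re, sub_re, one_re]
  constructor
  · rw [div_le_div_iff₀ (by linarith) hD, hD']
    nlinarith [mul_nonneg (sub_nonneg.mpr hρ.le) (neg_le_iff_add_nonneg.mp hre₁)]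
  · rw [div_le_div_iff₀ hD (by linarith), hD']
    nlinarith [mul_nonneg (sub_nonneg.mpr hre₂) (by linarith : (0:ℝ) ≤ 1 - w.re), sq_nonneg w.im]

lemma norm_sub_one_div_le_norm {β : ℝ} (hβ : β < 1) {p : ℂ → ℂ} (hp : p ∈ CaratheodoryClass β)
    {z : ℂ} (hz : z ∈ ball (0 : ℂ) 1) :
    ‖(p z - 1) / (p z + 1 - 2 * β)‖ ≤ ‖z‖ := by
  obtain ⟨hpd, hp0, hpre⟩ := hp
  refine norm_le_norm_of_mapsTo_ball (f := fun w => (p w - 1) / (p w + 1 - 2 * β)) ?_ ?_ ?_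
    (mem_ball_zero_iff.mp hz)
  · exact (hpd.sub_const 1).div ((hpd.add_const 1).sub_const _)
      fun w hw => add_one_sub_ne_zero hβ (hpre w hw)
  · intro w hw
    rw [mem_closedBall_zero_iff, norm_div, div_le_one₀ (norm_pos_iff.mpr
      (add_one_sub_ne_zero hβ (hpre w hw)))]
    exact (norm_sub_one_lt_norm_add_one_sub hβ (hpre w hw)).le
  · simp [hp0]

theorem CaratheodoryClass.re_mem_Icc {β : ℝ} (hβ : β < 1) {p : ℂ → ℂ}
    (hp : p ∈ CaratheodoryClass β) {z : ℂ} (hz : z ∈ ball (0 : ℂ) 1) :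
    (1 - (1 - 2 * β) * ‖z‖) / (1 + ‖z‖) ≤ (p z).re ∧
      (p z).re ≤ (1 + (1 - 2 * β) * ‖z‖) / (1 - ‖z‖) := by
  have hz1 : ‖z‖ < 1 := mem_ball_zero_iff.mp hz
  obtain ⟨hlow, hupp⟩ := re_inv_one_sub_mem_Icc (norm_sub_one_div_le_norm hβ hp hz) hz1
  have hre : (p z).re = 2 * β - 1 + 2 * (1 - β) * (1 - (p z - 1) / (p z + 1 - 2 * β))⁻¹.re := by
    conv_lhs => rw [eq_of_sub_one_div_add_one_sub hβ.ne (add_one_sub_ne_zero hβ (hp.2.2 z hz))]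
    simp
  set ρ := ‖z‖
  have hβ' : 0 ≤ 2 * (1 - β) := by linarith
  have hlow' : (1 - (1 - 2 * β) * ρ) / (1 + ρ) = 2 * β - 1 + 2 * (1 - β) * (1 / (1 + ρ)) := by
    field_simp [(by positivity : 1 + ρ ≠ 0)]; ring
  have hupp' : (1 + (1 - 2 * β) * ρ) / (1 - ρ) = 2 * β - 1 + 2 * (1 - β) * (1 / (1 - ρ)) := by
    field_simp [(sub_pos.mpr hz1).ne']; ring
  rw [hre, hlow', hupp']
  constructor <;> gcongr

theorem Pk_beta_lower_bound_general (k β ρ : ℝ) (hk : 2 ≤ k) (hβ1 : β < 1)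
    (hρ1 : ρ < 1)
    (p q : ℂ → ℂ)
    (hp : DifferentiableOn ℂ p (ball (0:ℂ) 1)) (hq : DifferentiableOn ℂ q (ball (0:ℂ) 1))
    (hp0 : p 0 = 1) (hq0 : q 0 = 1)
    (hpre : ∀ z ∈ ball (0:ℂ) 1, β < (p z).re)
    (hqre : ∀ z ∈ ball (0:ℂ) 1, β < (q z).re) :
    ∀ z : ℂ, ‖z‖ = ρ →
      ((1-2*β)*ρ^2 - (1-β)*k*ρ + 1) / (1 - ρ^2)
        ≤ ((((k:ℂ)+2)/4) * p z - (((k:ℂ)-2)/4) * q z).re := by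
  rintro z rfl
  have hz : z ∈ ball (0 : ℂ) 1 := mem_ball_zero_iff.mpr hρ1
  have hp_low := (CaratheodoryClass.re_mem_Icc hβ1 ⟨hp, hp0, hpre⟩ hz).1
  have hq_upp := (CaratheodoryClass.re_mem_Icc hβ1 ⟨hq, hq0, hqre⟩ hz).2
  have hre : ((((k:ℂ)+2)/4) * p z - (((k:ℂ)-2)/4) * q z).re
      = (k+2)/4 * (p z).re - (k-2)/4 * (q z).re := by
    simp [mul_re]
  have hbound : ((1-2*β)*‖z‖^2 - (1-β)*k*‖z‖ + 1) / (1 - ‖z‖^2)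
      = (k+2)/4 * ((1-(1-2*β)*‖z‖)/(1+‖z‖)) - (k-2)/4 * ((1+(1-2*β)*‖z‖)/(1-‖z‖)) := by
    have h₁ : 1 - ‖z‖ ≠ 0 := (sub_pos.mpr hρ1).ne'
    have h₂ : 1 - ‖z‖ ^ 2 ≠ 0 := by nlinarith [norm_nonneg z]
    field_simp
    ring
  rw [hre, hbound]
  gcongr

theorem Pk_beta_lower_bound (k β ρ : ℝ) (hk : 2 ≤ k) (hβ0 : 0 ≤ β) (hβ1 : β < 1)
    (hρ0 : 0 ≤ ρ) (hρ1 : ρ < 1)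
    (p q : ℂ → ℂ)
    (hp : DifferentiableOn ℂ p (ball (0:ℂ) 1)) (hq : DifferentiableOn ℂ q (ball (0:ℂ) 1))
    (hp0 : p 0 = 1) (hq0 : q 0 = 1)
    (hpre : ∀ z ∈ ball (0:ℂ) 1, β < (p z).re)
    (hqre : ∀ z ∈ ball (0:ℂ) 1, β < (q z).re) :
    ∀ z : ℂ, ‖z‖ = ρ →
      ((1-2*β)*ρ^2 - (1-β)*k*ρ + 1) / (1 - ρ^2)
        ≤ ((((k:ℂ)+2)/4) * p z - (((k:ℂ)-2)/4) * q z).re :=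
  Pk_beta_lower_bound_general k β ρ hk hβ1 hρ1 p q hp hq hp0 hq0 hpre hqre
end

section
/- For real k ≥ 2 and 0 ≤ β < 1, the function g(ρ) = ((1-2β)ρ² - (1-β)kρ + 1)/(1-ρ²) is positive for 0 ≤ ρ < r(k,β) and vanishes at ρ = r(k,β), where r(k,β) = ((1-β)k - √((1-β)²k² - 4(1-2β)))/(2(1-2β)) if β ≠ 1/2 and r(k,β) = 2/k if β = 1/2; moreover (1-β)²k² - 4(1-2β) ≥ 0 always holds under these hypotheses. -/
/-!
Write `q(ρ) = aρ² - bρ + 1` with `a = 1 - 2β` and `b = (1 - β)k > 0`. Its discriminant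
`b² - 4a = (1 - β)²(k² - 4) + 4β²` is nonnegative, and rationalizing the numerator turns both
branches of `r` into `r = 2 / (b + √(b² - 4a))`, the least positive root of `q`.
From `b·r = a·r² + 1` one gets `r·q(ρ) = (r - ρ)(1 - a·r·ρ)`, and `a·r² ≤ 1`, so `q > 0` on `[0, r)`.
Finally `q(1) = (1 - β)(2 - k) ≤ 0` forces `r ≤ 1`, so the denominator `1 - ρ²` is positive there.
-/

/-- The rationalized form of `(b - √(b² - 4a)) / (2a)`, which stays meaningful at `a = 0`. -/
noncomputable def leastPosRoot (a b : ℝ) : ℝ := 2 / (b + √(b ^ 2 - 4 * a))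

section leastPosRoot

variable {a b : ℝ}

lemma leastPosRoot_eq_sub_sqrt_div (ha : a ≠ 0) (hD : 0 ≤ b ^ 2 - 4 * a) (hb : 0 < b) :
    leastPosRoot a b = (b - √(b ^ 2 - 4 * a)) / (2 * a) := by
  have hs : 0 < b + √(b ^ 2 - 4 * a) := by positivity
  rw [leastPosRoot, div_eq_div_iff hs.ne' (mul_ne_zero two_ne_zero ha)]
  linear_combination Real.sq_sqrt hD

lemma leastPosRoot_zero_left (hb : 0 < b) : leastPosRoot 0 b = 1 / b := by
  rw [leastPosRoot, mul_zero, sub_zero, Real.sqrt_sq hb.le]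
  field_simp
  ring

lemma eval_leastPosRoot (hD : 0 ≤ b ^ 2 - 4 * a) (hb : 0 < b) :
    a * leastPosRoot a b ^ 2 - b * leastPosRoot a b + 1 = 0 := by
  have hs : 0 < b + √(b ^ 2 - 4 * a) := by positivity
  have hs2 := Real.sq_sqrt hD
  rw [leastPosRoot]
  generalize √(b ^ 2 - 4 * a) = s at hs hs2 ⊢
  field_simp
  linear_combination hs2

lemma mul_leastPosRoot_sq_le_one (hD : 0 ≤ b ^ 2 - 4 * a) (hb : 0 < b) :
    a * leastPosRoot a b ^ 2 ≤ 1 := by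
  have hs0 := Real.sqrt_nonneg (b ^ 2 - 4 * a)
  have hs : 0 < b + √(b ^ 2 - 4 * a) := by positivity
  rw [leastPosRoot, div_pow, mul_div_assoc', div_le_one (by positivity)]
  nlinarith [Real.sq_sqrt hD]

end leastPosRoot

lemma quadratic_pos_of_lt_root {a b r x : ℝ} (hr : a * r ^ 2 - b * r + 1 = 0)
    (har : a * r ^ 2 ≤ 1) (hx0 : 0 ≤ x) (hxr : x < r) : 0 < a * x ^ 2 - b * x + 1 := by
  have hr0 : 0 < r := hx0.trans_lt hxr
  have hfactor : r * (a * x ^ 2 - b * x + 1) = (r - x) * (1 - a * r * x) := by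
    linear_combination x * hr
  have hlin : 0 < 1 - a * r * x := by
    rcases le_or_gt a 0 with ha | ha
    · nlinarith [mul_nonneg hr0.le hx0]
    · nlinarith [mul_lt_mul_of_pos_left hxr (mul_pos ha hr0)]
  have hprod : 0 < r * (a * x ^ 2 - b * x + 1) := hfactor ▸ mul_pos (sub_pos.2 hxr) hlin
  exact pos_of_mul_pos_right hprod hr0.le

lemma quadratic_pos_of_lt_leastPosRoot {a b x : ℝ} (hD : 0 ≤ b ^ 2 - 4 * a) (hb : 0 < b)
    (hx0 : 0 ≤ x) (hx : x < leastPosRoot a b) : 0 < a * x ^ 2 - b * x + 1 :=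
  quadratic_pos_of_lt_root (eval_leastPosRoot hD hb) (mul_leastPosRoot_sq_le_one hD hb) hx0 hx

lemma leastPosRoot_le_of_quadratic_nonpos {a b x : ℝ} (hD : 0 ≤ b ^ 2 - 4 * a) (hb : 0 < b)
    (hx0 : 0 ≤ x) (hq : a * x ^ 2 - b * x + 1 ≤ 0) : leastPosRoot a b ≤ x :=
  le_of_not_gt fun hx => hq.not_gt (quadratic_pos_of_lt_leastPosRoot hD hb hx0 hx)

lemma discrim_nonneg_of_two_le (β : ℝ) {k : ℝ} (hk : 2 ≤ k) :
    0 ≤ (1 - β) ^ 2 * k ^ 2 - 4 * (1 - 2 * β) := by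
  have hk2 : 0 ≤ k ^ 2 - 4 := by nlinarith
  nlinarith [mul_nonneg (sq_nonneg (1 - β)) hk2, sq_nonneg β]

theorem radius_positivity_general (k β : ℝ) (hk : 2 ≤ k) (hβ1 : β < 1)
    (r : ℝ)
    (hr : r = if β = 1/2 then 2/k
          else ((1-β)*k - Real.sqrt ((1-β)^2*k^2 - 4*(1-2*β))) / (2*(1-2*β))) :
    (∀ ρ : ℝ, 0 ≤ ρ → ρ < r →
      0 < ((1-2*β)*ρ^2 - (1-β)*k*ρ + 1) / (1 - ρ^2)) ∧
    ((1-2*β)*r^2 - (1-β)*k*r + 1) / (1 - r^2) = 0 ∧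
    0 ≤ (1-β)^2*k^2 - 4*(1-2*β) := by
  have hD := discrim_nonneg_of_two_le β hk
  have hb : 0 < (1 - β) * k := mul_pos (by linarith) (by linarith)
  rw [← mul_pow] at hD hr ⊢
  have hr_eq : r = leastPosRoot (1 - 2 * β) ((1 - β) * k) := by
    rw [hr]
    split_ifs with hβ
    · subst hβ
      rw [show (1 : ℝ) - 2 * (1 / 2) = 0 by norm_num, leastPosRoot_zero_left hb]
      field_simp
      norm_num
    · exact (leastPosRoot_eq_sub_sqrt_div (by contrapose! hβ; linarith) hD hb).symm
  have hq1 : (1 - 2 * β) * 1 ^ 2 - (1 - β) * k * 1 + 1 ≤ 0 := by nlinarith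
  have hr1 : r ≤ 1 := hr_eq ▸ leastPosRoot_le_of_quadratic_nonpos hD hb zero_le_one hq1
  refine ⟨fun ρ hρ0 hρr => div_pos ?_ ?_, ?_, hD⟩
  · exact quadratic_pos_of_lt_leastPosRoot hD hb hρ0 (hr_eq ▸ hρr)
  · nlinarith
  · rw [hr_eq, eval_leastPosRoot hD hb, zero_div]

theorem radius_positivity (k β : ℝ) (hk : 2 ≤ k) (hβ0 : 0 ≤ β) (hβ1 : β < 1)
    (r : ℝ)
    (hr : r = if β = 1/2 then 2/k
          else ((1-β)*k - Real.sqrt ((1-β)^2*k^2 - 4*(1-2*β))) / (2*(1-2*β))) :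
    (∀ ρ : ℝ, 0 ≤ ρ → ρ < r →
      0 < ((1-2*β)*ρ^2 - (1-β)*k*ρ + 1) / (1 - ρ^2)) ∧
    ((1-2*β)*r^2 - (1-β)*k*r + 1) / (1 - r^2) = 0 ∧
    0 ≤ (1-β)^2*k^2 - 4*(1-2*β) :=
  radius_positivity_general k β hk hβ1 r hr
end

section
/- Let 0 ≤ β < 1, k ≥ 2, c > -1 and let f be analytic on the unit disk with f(0)=0, f′(0)=1, such that f(z)/z ∈ P_k(β) (i.e., f(z)/z = ((k+2)/4)p(z) - ((k-2)/4)q(z) with p,q ∈ P(β)). Define F(z) = ((c+1)/z^c)∫₀^z t^{c-1} f(t) dt. Then F(z)/z ∈ P_k(β). -/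
/-!
Substituting `t = s z`, `F(z)/z` is the weighted radial mean `(c+1) ∫₀¹ sᶜ g(s z) ds` of
`g(z) = f(z)/z`. This mean is linear, fixes constants and, its weight being positive, maps
functions of positive real part to functions of positive real part; hence it maps `P(β)` into
itself. Applying it to `g = ((k+2)/4) p - ((k-2)/4) q` exhibits `F(z)/z` in `P_k(β)`, with the
means of `p` and `q` as the new pair.
-/

open Metric intervalIntegral

/-- The Bernardi–Libera integral operator
`F(z) = ((c+1)/z^c) ∫₀^z t^{c-1} f(t) dt` along the radial segment. -/
noncomputable def bernardi (c : ℝ) (f : ℂ → ℂ) (z : ℂ) : ℂ :=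
  (((c:ℂ) + 1) / z ^ (c:ℂ)) *
    (z * ∫ s in (0:ℝ)..1, ((s:ℂ) * z) ^ ((c:ℂ) - 1) * f ((s:ℂ) * z))

open MeasureTheory Set

/-- The map `g ↦ ((c+1)/z^{c+1}) ∫₀^z t^c g(t) dt`, written along the radius `t = s z`. -/
noncomputable def radialMean (c : ℝ) (g : ℂ → ℂ) (z : ℂ) : ℂ :=
  ((c:ℂ) + 1) * ∫ s in (0:ℝ)..1, s ^ c • g (s * z)

lemma ofReal_mul_mem_ball {r s : ℝ} (hs0 : 0 ≤ s) (hs1 : s ≤ 1) {z : ℂ}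
    (hz : z ∈ ball (0:ℂ) r) : (s:ℂ) * z ∈ ball (0:ℂ) r := by
  rw [mem_ball_zero_iff] at hz ⊢
  rw [norm_mul, Complex.norm_of_nonneg hs0]
  exact (mul_le_of_le_one_left (norm_nonneg z) hs1).trans_lt hz

section

variable {c : ℝ} {g h : ℂ → ℂ} {z : ℂ}

lemma continuousOn_comp_ofReal_mul (hg : ContinuousOn g (ball 0 1)) (hz : z ∈ ball (0:ℂ) 1) :
    ContinuousOn (fun s : ℝ => g (s * z)) (uIcc 0 1) :=
  hg.comp (by fun_prop) fun s hs => by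
    rw [uIcc_of_le zero_le_one] at hs
    exact ofReal_mul_mem_ball hs.1 hs.2 hz

lemma intervalIntegrable_rpow_smul_comp (hc : -1 < c) (hg : ContinuousOn g (ball 0 1))
    (hz : z ∈ ball (0:ℂ) 1) :
    IntervalIntegrable (fun s : ℝ => s ^ c • g (s * z)) volume 0 1 :=
  (intervalIntegrable_rpow' hc).smul_continuousOn (continuousOn_comp_ofReal_mul hg hz)

lemma integral_rpow_zero_one (hc : -1 < c) : ∫ s in (0:ℝ)..1, s ^ c = 1 / (c + 1) := by
  rw [integral_rpow (Or.inl hc), Real.one_rpow, Real.zero_rpow (by linarith), sub_zero]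

lemma radialMean_const (hc : -1 < c) (a : ℂ) : radialMean c (fun _ => a) z = a := by
  have hc1 : (c:ℂ) + 1 ≠ 0 := by exact_mod_cast (by linarith : c + 1 ≠ 0)
  rw [radialMean, intervalIntegral.integral_smul_const, integral_rpow_zero_one hc,
    Complex.real_smul]
  push_cast
  field_simp

lemma radialMean_zero (hc : -1 < c) : radialMean c g 0 = g 0 := by
  simpa only [radialMean, mul_zero] using radialMean_const hc (g 0) (z := 0)

lemma radialMean_const_mul (a : ℂ) :
    radialMean c (fun w => a * g w) z = a * radialMean c g z := by
  simp only [radialMean, ← mul_smul_comm, intervalIntegral.integral_const_mul]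
  ring

lemma radialMean_sub (hc : -1 < c) (hg : ContinuousOn g (ball 0 1))
    (hh : ContinuousOn h (ball 0 1)) (hz : z ∈ ball (0:ℂ) 1) :
    radialMean c (fun w => g w - h w) z = radialMean c g z - radialMean c h z := by
  simp only [radialMean, smul_sub]
  rw [integral_sub (intervalIntegrable_rpow_smul_comp hc hg hz)
    (intervalIntegrable_rpow_smul_comp hc hh hz), mul_sub]

lemma radialMean_congr (hgh : ∀ w ∈ ball (0:ℂ) 1, w ≠ 0 → g w = h w) (hz : z ∈ ball (0:ℂ) 1)
    (hz0 : z ≠ 0) : radialMean c g z = radialMean c h z := by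
  rw [radialMean, radialMean, intervalIntegral.integral_congr_ae]
  refine Filter.Eventually.of_forall fun s hs => ?_
  rw [uIoc_of_le zero_le_one] at hs
  rw [hgh _ (ofReal_mul_mem_ball hs.1.le hs.2 hz)
    (mul_ne_zero (Complex.ofReal_ne_zero.mpr hs.1.ne') hz0)]

lemma re_radialMean (hc : -1 < c) (hg : ContinuousOn g (ball 0 1)) (hz : z ∈ ball (0:ℂ) 1) :
    (radialMean c g z).re = (c + 1) * ∫ s in (0:ℝ)..1, s ^ c * (g (s * z)).re := by
  have hre := intervalIntegral_re (intervalIntegrable_rpow_smul_comp hc hg hz)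
  simp only [RCLike.re_to_complex, Complex.smul_re, smul_eq_mul] at hre
  rw [radialMean, show (c:ℂ) + 1 = ((c + 1 : ℝ) : ℂ) by push_cast; rfl,
    Complex.re_ofReal_mul, ← hre]

lemma re_radialMean_pos (hc : -1 < c) (hg : ContinuousOn g (ball 0 1))
    (hpos : ∀ w ∈ ball (0:ℂ) 1, 0 < (g w).re) (hz : z ∈ ball (0:ℂ) 1) :
    0 < (radialMean c g z).re := by
  rw [re_radialMean hc hg hz]
  refine mul_pos (by linarith) (intervalIntegral_pos_of_pos_on ?_ (fun s hs => ?_) zero_lt_one)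
  · exact (intervalIntegrable_rpow' hc).mul_continuousOn
      (Complex.continuous_re.comp_continuousOn (continuousOn_comp_ofReal_mul hg hz))
  · exact mul_pos (Real.rpow_pos_of_pos hs.1 c) (hpos _ (ofReal_mul_mem_ball hs.1.le hs.2.le hz))

lemma lt_re_radialMean {β : ℝ} (hc : -1 < c) (hg : ContinuousOn g (ball 0 1))
    (hβ : ∀ w ∈ ball (0:ℂ) 1, β < (g w).re) (hz : z ∈ ball (0:ℂ) 1) :
    β < (radialMean c g z).re := by
  have hpos := re_radialMean_pos (g := fun w => g w - β) hc (hg.sub continuousOn_const)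
    (fun w hw => by simpa using hβ w hw) hz
  rw [radialMean_sub hc hg continuousOn_const hz, radialMean_const hc] at hpos
  simpa using hpos

lemma hasDerivAt_rpow_smul_comp_ofReal_mul {t : ℝ} {x : ℂ} (hg : DifferentiableAt ℂ g (t * x)) :
    HasDerivAt (fun y => t ^ c • g (t * y)) (t ^ c • (t * deriv g (t * x))) x := by
  have hcomp := hg.hasDerivAt.comp x ((hasDerivAt_id x).const_mul (t:ℂ))
  rw [mul_one, mul_comm] at hcomp
  exact hcomp.const_smul (t ^ c)

/-- Differentiation under the integral sign: near `z₀` the `z`-derivative of the integrand is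
dominated by `sᶜ · sup ‖g'‖`, the supremum taken over a closed disc of radius `r < 1`. -/
lemma differentiableOn_radialMean (hc : -1 < c) (hg : DifferentiableOn ℂ g (ball 0 1)) :
    DifferentiableOn ℂ (radialMean c g) (ball 0 1) := by
  have hg' : ContinuousOn (deriv g) (ball 0 1) :=
    (hg.analyticOnNhd isOpen_ball).deriv.continuousOn
  intro z₀ hz₀
  obtain ⟨r, hz₀r, hr1⟩ := exists_between (mem_ball_zero_iff.mp hz₀)
  obtain ⟨M, hM⟩ := (isCompact_closedBall (0:ℂ) r).exists_bound_of_continuousOn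
    (hg'.mono (closedBall_subset_ball hr1))
  have hmem : ∀ t ∈ Ioc (0:ℝ) 1, ∀ x ∈ ball z₀ (r - ‖z₀‖), (t:ℂ) * x ∈ ball (0:ℂ) r := by
    intro t ht x hx
    refine ofReal_mul_mem_ball ht.1.le ht.2 (ball_subset_ball' ?_ hx)
    rw [dist_zero_right]
    linarith
  have hderiv := hasDerivAt_integral_of_dominated_loc_of_deriv_le
    (F := fun x (t : ℝ) => t ^ c • g (t * x)) (F' := fun x t => t ^ c • (t * deriv g (t * x)))
    (bound := fun t => t ^ c * M) (ball_mem_nhds z₀ (sub_pos.2 hz₀r)) ?_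
    (intervalIntegrable_rpow_smul_comp hc hg.continuousOn hz₀) ?_ ?_
    ((intervalIntegrable_rpow' hc).mul_const M) ?_
  · exact (hderiv.2.differentiableAt.const_mul _).differentiableWithinAt
  · filter_upwards [isOpen_ball.mem_nhds hz₀] with x hx
    exact (intervalIntegrable_rpow_smul_comp hc hg.continuousOn hx).def'.aestronglyMeasurable
  · exact ((intervalIntegrable_rpow' hc).smul_continuousOn
      (Complex.continuous_ofReal.continuousOn.mul
        (continuousOn_comp_ofReal_mul hg' hz₀))).def'.aestronglyMeasurable
  · refine Filter.Eventually.of_forall fun t ht x hx => ?_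
    rw [uIoc_of_le zero_le_one] at ht
    have hderiv_le : ‖deriv g (t * x)‖ ≤ M := hM _ (ball_subset_closedBall (hmem t ht x hx))
    rw [norm_smul, norm_mul, Complex.norm_of_nonneg ht.1.le,
      Real.norm_of_nonneg (Real.rpow_nonneg ht.1.le c)]
    exact mul_le_mul_of_nonneg_left
      ((mul_le_of_le_one_left (norm_nonneg _) ht.2).trans hderiv_le) (Real.rpow_nonneg ht.1.le c)
  · refine Filter.Eventually.of_forall fun t ht x hx => ?_
    rw [uIoc_of_le zero_le_one] at ht
    exact hasDerivAt_rpow_smul_comp_ofReal_mul (hg.differentiableAt (isOpen_ball.mem_nhds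
      (ball_subset_ball hr1.le (hmem t ht x hx))))

end

lemma ofReal_mul_cpow {s : ℝ} (hs : 0 < s) {z : ℂ} (hz : z ≠ 0) (w : ℂ) :
    ((s:ℂ) * z) ^ w = (s:ℂ) ^ w * z ^ w := by
  have hs' : (s:ℂ) ≠ 0 := Complex.ofReal_ne_zero.mpr hs.ne'
  rw [Complex.cpow_def_of_ne_zero (mul_ne_zero hs' hz), Complex.cpow_def_of_ne_zero hs',
    Complex.cpow_def_of_ne_zero hz, Complex.log_ofReal_mul hs hz, add_mul, Complex.exp_add,
    Complex.ofReal_log hs.le]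

lemma bernardi_div_eq_radialMean {c : ℝ} {f : ℂ → ℂ} {z : ℂ} (hz : z ≠ 0) :
    bernardi c f z / z = radialMean c (fun w => f w / w) z := by
  have hzc : z ^ (c:ℂ) ≠ 0 := by simp [Complex.cpow_eq_zero_iff, hz]
  have hintegrand : (∫ s in (0:ℝ)..1, ((s:ℂ) * z) ^ ((c:ℂ) - 1) * f (s * z))
      = z ^ (c:ℂ) * ∫ s in (0:ℝ)..1, s ^ c • (f (s * z) / (s * z)) := by
    rw [← intervalIntegral.integral_const_mul]
    refine intervalIntegral.integral_congr_ae (Filter.Eventually.of_forall fun s hs => ?_)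
    rw [uIoc_of_le zero_le_one] at hs
    have hsz : (s:ℂ) * z ≠ 0 := mul_ne_zero (Complex.ofReal_ne_zero.mpr hs.1.ne') hz
    rw [Complex.cpow_sub _ _ hsz, Complex.cpow_one, ofReal_mul_cpow hs.1 hz,
      ← Complex.ofReal_cpow hs.1.le, Complex.real_smul]
    ring
  rw [bernardi, hintegrand, radialMean]
  field_simp

theorem bernardi_preserves_Pk_general (k β c : ℝ)
    (hc : -1 < c)
    (f p q : ℂ → ℂ)
    (hp : DifferentiableOn ℂ p (ball (0:ℂ) 1)) (hq : DifferentiableOn ℂ q (ball (0:ℂ) 1))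
    (hp0 : p 0 = 1) (hq0 : q 0 = 1)
    (hpre : ∀ z ∈ ball (0:ℂ) 1, β < (p z).re)
    (hqre : ∀ z ∈ ball (0:ℂ) 1, β < (q z).re)
    (hfpq : ∀ z ∈ ball (0:ℂ) 1, z ≠ 0 →
      f z / z = (((k:ℂ)+2)/4) * p z - (((k:ℂ)-2)/4) * q z) :
    ∃ p' q' : ℂ → ℂ,
      DifferentiableOn ℂ p' (ball (0:ℂ) 1) ∧ p' 0 = 1 ∧
      (∀ z ∈ ball (0:ℂ) 1, β < (p' z).re) ∧
      DifferentiableOn ℂ q' (ball (0:ℂ) 1) ∧ q' 0 = 1 ∧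
      (∀ z ∈ ball (0:ℂ) 1, β < (q' z).re) ∧
      ∀ z ∈ ball (0:ℂ) 1, z ≠ 0 →
        bernardi c f z / z = (((k:ℂ)+2)/4) * p' z - (((k:ℂ)-2)/4) * q' z := by
  refine ⟨radialMean c p, radialMean c q,
    differentiableOn_radialMean hc hp, (radialMean_zero hc).trans hp0,
    fun z hz => lt_re_radialMean hc hp.continuousOn hpre hz,
    differentiableOn_radialMean hc hq, (radialMean_zero hc).trans hq0,
    fun z hz => lt_re_radialMean hc hq.continuousOn hqre hz, fun z hz hz0 => ?_⟩
  rw [bernardi_div_eq_radialMean hz0, radialMean_congr hfpq hz hz0,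
    radialMean_sub hc (by exact continuousOn_const.mul hp.continuousOn)
      (by exact continuousOn_const.mul hq.continuousOn) hz,
    radialMean_const_mul, radialMean_const_mul]

theorem bernardi_preserves_Pk (k β c : ℝ) (hk : 2 ≤ k) (hβ0 : 0 ≤ β) (hβ1 : β < 1)
    (hc : -1 < c)
    (f p q : ℂ → ℂ)
    (hf : DifferentiableOn ℂ f (ball (0:ℂ) 1)) (hf0 : f 0 = 0) (hf'0 : deriv f 0 = 1)
    (hp : DifferentiableOn ℂ p (ball (0:ℂ) 1)) (hq : DifferentiableOn ℂ q (ball (0:ℂ) 1))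
    (hp0 : p 0 = 1) (hq0 : q 0 = 1)
    (hpre : ∀ z ∈ ball (0:ℂ) 1, β < (p z).re)
    (hqre : ∀ z ∈ ball (0:ℂ) 1, β < (q z).re)
    (hfpq : ∀ z ∈ ball (0:ℂ) 1, z ≠ 0 →
      f z / z = (((k:ℂ)+2)/4) * p z - (((k:ℂ)-2)/4) * q z) :
    ∃ p' q' : ℂ → ℂ,
      DifferentiableOn ℂ p' (ball (0:ℂ) 1) ∧ p' 0 = 1 ∧
      (∀ z ∈ ball (0:ℂ) 1, β < (p' z).re) ∧
      DifferentiableOn ℂ q' (ball (0:ℂ) 1) ∧ q' 0 = 1 ∧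
      (∀ z ∈ ball (0:ℂ) 1, β < (q' z).re) ∧
      ∀ z ∈ ball (0:ℂ) 1, z ≠ 0 →
        bernardi c f z / z = (((k:ℂ)+2)/4) * p' z - (((k:ℂ)-2)/4) * q' z :=
  bernardi_preserves_Pk_general k β c hc f p q hp hq hp0 hq0 hpre hqre hfpq
end
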